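/- arXiv:1709.00752 — 4 statements merged into one kernel-verified Lean document; each statement's English description precedes it below -/
import Mathlib

section
/- Let n be a positive even integer and let X = (X_1, …, X_n) be a random variable taking values in {0,1}^n whose joint distribution is (n/2)-wise independent. Then the Shannon entropy of X satisfies H(X) ≥ n − log₂(n+1). -/
/-- `p` is the probability mass function of a `k`-wise independent random variable
taking values in `{0,1}^n`: every restriction to at most `k` coordinates is uniform. -/
def KWiseIndep (n k : ℕ) (p : (Fin n → Bool) → ℝ) : Prop :=
  ∀ S : Finset (Fin n), S.card ≤ k → ∀ a : Fin n → Bool,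
    (∑ x ∈ Finset.univ.filter fun x => ∀ i ∈ S, x i = a i, p x) = (1 / 2 : ℝ) ^ S.card

/-- Shannon entropy (base 2) of a pmf on `{0,1}^n`; note `Real.logb 2 0 = 0`,
matching the convention `0 · log₂ 0 = 0`. -/
noncomputable def shannonEntropy {n : ℕ} (p : (Fin n → Bool) → ℝ) : ℝ :=
  -∑ x, p x * Real.logb 2 (p x)

/-!
Let `p̂(S) = ∑ₓ p(x) (-1)^{∑_{i∈S} xᵢ}`. Independence of any `⌊n/2⌋` coordinates forces
`p̂(S) = 0` for `0 < |S| ≤ n/2`, while `p̂(∅) = 1`. For nonnegative `p`, the Delsarte form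
`∑_S p̂(S)² (n - 2|S|)` is `2ⁿ` times the sum of `p(x) p(y)` over ordered pairs of neighbours in
the cube, hence nonnegative; as `n - 2|S| ≤ -1` once `|S| > n/2`, this gives
`∑_{S ≠ ∅} p̂(S)² ≤ n`. By Parseval the collision probability `∑ₓ p(x)²` is at most `(n+1)/2ⁿ`,
and the Shannon entropy dominates the collision entropy `-log₂ ∑ₓ p(x)²`.
-/

open Finset

namespace BooleanCube

variable {ι : Type*}

noncomputable def walsh (S : Finset ι) (x : ι → Bool) : ℝ :=
  ∏ i ∈ S, if x i then -1 else 1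

theorem walsh_mul_walsh (S : Finset ι) (x y : ι → Bool) :
    walsh S x * walsh S y = walsh S fun i => xor (x i) (y i) := by
  rw [walsh, walsh, walsh, ← prod_mul_distrib]
  refine prod_congr rfl fun i _ => ?_
  cases x i <;> cases y i <;> norm_num

theorem walsh_update_not [DecidableEq ι] (S : Finset ι) (z : ι → Bool) (i : ι) :
    walsh S (Function.update z i (!z i)) = walsh S z * if i ∈ S then -1 else 1 := by
  have hrest : ∀ T : Finset ι, i ∉ T →
      ∏ j ∈ T, (if Function.update z i (!z i) j then (-1 : ℝ) else 1) =
        ∏ j ∈ T, if z j then -1 else 1 := fun T hT =>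
    prod_congr rfl fun j hj => by rw [Function.update_of_ne (ne_of_mem_of_not_mem hj hT)]
  split_ifs with hi
  · rw [walsh, walsh, ← mul_prod_erase _ _ hi, ← mul_prod_erase _ _ hi,
      hrest _ (notMem_erase i S), Function.update_self]
    cases z i <;> norm_num
  · rw [walsh, walsh, hrest S hi, mul_one]

theorem walsh_eq_sum_powerset (S : Finset ι) (x : ι → Bool) :
    walsh S x = ∑ T ∈ S.powerset, (-2) ^ #T * ∏ i ∈ T, if x i then 1 else 0 := by
  have hfactor : ∀ i, (if x i then (-1 : ℝ) else 1) = 1 + -2 * if x i then 1 else 0 := by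
    intro i; cases x i <;> norm_num
  simp only [walsh, hfactor, prod_one_add, prod_mul_distrib, prod_const]

variable [Fintype ι]

theorem sum_walsh (z : ι → Bool) :
    ∑ S : Finset ι, walsh S z = if z = fun _ => false then 2 ^ Fintype.card ι else 0 := by
  rw [show ∑ S : Finset ι, walsh S z = ∏ i, (1 + if z i then -1 else 1) by
    rw [prod_one_add, powerset_univ]; rfl]
  split_ifs with hz
  · subst hz; norm_num
  · obtain ⟨i, hi⟩ : ∃ i, z i = true := by
      by_contra! h
      exact hz (funext fun i => by simpa using h i)
    exact prod_eq_zero (mem_univ i) (by simp [hi])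

variable [DecidableEq ι]

theorem card_sub_two_mul_card_eq_sum (S : Finset ι) :
    (Fintype.card ι : ℝ) - 2 * #S = ∑ i, if i ∈ S then -1 else 1 := by
  rw [sum_ite, sum_const, sum_const, filter_mem_eq_inter, univ_inter, filter_not,
    filter_mem_eq_inter, univ_inter, card_sdiff_of_subset (subset_univ S), card_univ]
  simp [Nat.cast_sub (card_le_univ S)]
  ring

theorem sum_walsh_mul_card_sub_nonneg (z : ι → Bool) :
    0 ≤ ∑ S : Finset ι, walsh S z * ((Fintype.card ι : ℝ) - 2 * #S) := by
  simp_rw [card_sub_two_mul_card_eq_sum, mul_sum, ← walsh_update_not]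
  rw [sum_comm]
  exact sum_nonneg fun i _ => by rw [sum_walsh]; positivity

noncomputable def fourierCoeff (p : (ι → Bool) → ℝ) (S : Finset ι) : ℝ :=
  ∑ x, p x * walsh S x

theorem sum_sq_fourierCoeff_mul (p : (ι → Bool) → ℝ) (w : Finset ι → ℝ) :
    ∑ S, fourierCoeff p S ^ 2 * w S =
      ∑ x, ∑ y, p x * p y * ∑ S, walsh S (fun i => xor (x i) (y i)) * w S := by
  simp_rw [fourierCoeff, sq, sum_mul_sum, sum_mul, mul_sum, ← walsh_mul_walsh]
  rw [sum_comm]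
  refine sum_congr rfl fun x _ => ?_
  rw [sum_comm]
  refine sum_congr rfl fun y _ => sum_congr rfl fun S _ => by ring

theorem sum_sq_fourierCoeff (p : (ι → Bool) → ℝ) :
    ∑ S, fourierCoeff p S ^ 2 = 2 ^ Fintype.card ι * ∑ x, p x ^ 2 := by
  have hxor : ∀ x y : ι → Bool, ((fun i => xor (x i) (y i)) = fun _ => false) ↔ y = x := by
    intro x y
    rw [funext_iff, funext_iff]
    exact forall_congr' fun i => by cases x i <;> cases y i <;> decide
  rw [mul_sum]
  have h := sum_sq_fourierCoeff_mul p fun _ => 1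
  simp only [mul_one] at h
  rw [h]
  refine sum_congr rfl fun x _ => ?_
  simp only [sum_walsh, hxor, mul_ite, mul_zero]
  rw [sum_ite_eq' univ x]
  simp only [mem_univ, if_true]
  ring

theorem sum_sq_fourierCoeff_mul_card_sub_nonneg {p : (ι → Bool) → ℝ} (hp0 : ∀ x, 0 ≤ p x) :
    0 ≤ ∑ S, fourierCoeff p S ^ 2 * ((Fintype.card ι : ℝ) - 2 * #S) := by
  rw [sum_sq_fourierCoeff_mul]
  exact sum_nonneg fun x _ => sum_nonneg fun y _ =>
    mul_nonneg (mul_nonneg (hp0 x) (hp0 y)) (sum_walsh_mul_card_sub_nonneg _)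

theorem fourierCoeff_empty (p : (ι → Bool) → ℝ) : fourierCoeff p ∅ = ∑ x, p x := by
  simp [fourierCoeff, walsh]

theorem fourierCoeff_eq_zero_of_kWiseIndep {n k : ℕ} {p : (Fin n → Bool) → ℝ}
    (hp : KWiseIndep n k p) {S : Finset (Fin n)} (hS : S.Nonempty) (hSk : #S ≤ k) :
    fourierCoeff p S = 0 := by
  have hmarginal : ∀ T ∈ S.powerset,
      ∑ x, p x * ∏ i ∈ T, (if x i then 1 else 0) = (1 / 2) ^ #T := fun T hT => by
    rw [← hp T ((card_le_card (mem_powerset.1 hT)).trans hSk) fun _ => true, sum_filter]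
    simp only [prod_boole, mul_ite, mul_one, mul_zero]
  calc fourierCoeff p S
      = ∑ T ∈ S.powerset, (-2) ^ #T * ∑ x, p x * ∏ i ∈ T, if x i then 1 else 0 := by
        simp_rw [fourierCoeff, walsh_eq_sum_powerset, mul_sum]
        rw [sum_comm]
        exact sum_congr rfl fun T _ => sum_congr rfl fun x _ => mul_left_comm _ _ _
    _ = ∑ T ∈ S.powerset, (-1) ^ #T := sum_congr rfl fun T hT => by
        rw [hmarginal T hT, ← mul_pow]; norm_num
    _ = 0 := by exact_mod_cast sum_powerset_neg_one_pow_card_of_nonempty hS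

theorem two_pow_mul_sum_sq_le_of_kWiseIndep {n : ℕ} {p : (Fin n → Bool) → ℝ}
    (hp0 : ∀ x, 0 ≤ p x) (hp1 : ∑ x, p x = 1) (hp : KWiseIndep n (n / 2) p) :
    2 ^ n * ∑ x, p x ^ 2 ≤ n + 1 := by
  have hweight : ∀ S : Finset (Fin n),
      fourierCoeff p S ^ 2 * (1 + (n - 2 * #S)) ≤ if S = ∅ then (n : ℝ) + 1 else 0 := by
    intro S
    split_ifs with hS
    · simp [hS, fourierCoeff_empty, hp1, add_comm]
    by_cases hSk : #S ≤ n / 2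
    · simp [fourierCoeff_eq_zero_of_kWiseIndep hp (nonempty_iff_ne_empty.2 hS) hSk]
    · have : (n : ℝ) + 1 ≤ 2 * #S := by exact_mod_cast (by omega : n + 1 ≤ 2 * #S)
      exact mul_nonpos_of_nonneg_of_nonpos (sq_nonneg _) (by linarith)
  have hparseval := sum_sq_fourierCoeff p
  have hdelsarte := sum_sq_fourierCoeff_mul_card_sub_nonneg hp0
  rw [Fintype.card_fin] at hparseval hdelsarte
  calc 2 ^ n * ∑ x, p x ^ 2
      = ∑ S, fourierCoeff p S ^ 2 * (1 + (n - 2 * #S))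
          - ∑ S, fourierCoeff p S ^ 2 * (n - 2 * #S) := by
        rw [← hparseval, ← sum_sub_distrib]
        exact sum_congr rfl fun S _ => by ring
    _ ≤ ∑ S : Finset (Fin n), (if S = ∅ then (n : ℝ) + 1 else 0) - 0 :=
        sub_le_sub (sum_le_sum fun S _ => hweight S) hdelsarte
    _ = n + 1 := by simp

end BooleanCube

theorem sum_sq_pos_of_sum_eq_one {α : Type*} [Fintype α] {p : α → ℝ} (hp1 : ∑ x, p x = 1) :
    0 < ∑ x, p x ^ 2 := by
  refine (sum_nonneg fun x _ => sq_nonneg (p x)).lt_of_ne fun h => ?_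
  have hzero := (sum_eq_zero_iff_of_nonneg fun x _ => sq_nonneg (p x)).1 h.symm
  simp_all

theorem sum_mul_log_le_log_sum_sq {α : Type*} [Fintype α] {p : α → ℝ}
    (hp0 : ∀ x, 0 ≤ p x) (hp1 : ∑ x, p x = 1) :
    ∑ x, p x * Real.log (p x) ≤ Real.log (∑ x, p x ^ 2) := by
  set Q := ∑ x, p x ^ 2
  have hQ : 0 < Q := sum_sq_pos_of_sum_eq_one hp1
  -- `log u ≤ u - 1` at `u = p x / Q`, weighted by `p x`
  have hterm : ∀ x, p x * Real.log (p x) - p x * Real.log Q ≤ p x ^ 2 / Q - p x := by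
    intro x
    rcases (hp0 x).eq_or_lt with hx | hx
    · simp [← hx]
    calc p x * Real.log (p x) - p x * Real.log Q = p x * Real.log (p x / Q) := by
          rw [Real.log_div hx.ne' hQ.ne']; ring
      _ ≤ p x * (p x / Q - 1) :=
          mul_le_mul_of_nonneg_left (Real.log_le_sub_one_of_pos (by positivity)) hx.le
      _ = p x ^ 2 / Q - p x := by ring
  have hsum := sum_le_sum fun x (_ : x ∈ univ) => hterm x
  rw [sum_sub_distrib, sum_sub_distrib, ← sum_mul, ← sum_div, hp1, div_self hQ.ne'] at hsum
  linarith

theorem neg_logb_sum_sq_le_shannonEntropy {n : ℕ} {p : (Fin n → Bool) → ℝ}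
    (hp0 : ∀ x, 0 ≤ p x) (hp1 : ∑ x, p x = 1) :
    -Real.logb 2 (∑ x, p x ^ 2) ≤ shannonEntropy p := by
  have hlog2 : 0 < Real.log 2 := Real.log_pos one_lt_two
  rw [shannonEntropy, Real.logb, neg_le_neg_iff]
  simp_rw [Real.logb, mul_div_assoc', ← sum_div]
  exact div_le_div_of_nonneg_right (sum_mul_log_le_log_sum_sq hp0 hp1) hlog2.le

theorem entropy_of_half_wise_indep_general (n : ℕ)
    (p : (Fin n → Bool) → ℝ) (hp0 : ∀ x, 0 ≤ p x) (hp1 : ∑ x, p x = 1)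
    (hindep : KWiseIndep n (n / 2) p) :
    shannonEntropy p ≥ (n : ℝ) - Real.logb 2 ((n : ℝ) + 1) := by
  have hcollision : ∑ x, p x ^ 2 ≤ (n + 1) / 2 ^ n := by
    rw [le_div_iff₀ (by positivity), mul_comm]
    exact BooleanCube.two_pow_mul_sum_sq_le_of_kWiseIndep hp0 hp1 hindep
  calc (n : ℝ) - Real.logb 2 (n + 1) = -Real.logb 2 ((n + 1) / 2 ^ n) := by
        rw [Real.logb_div (by positivity) (by positivity), Real.logb_pow,
          Real.logb_self_eq_one one_lt_two]
        ring
    _ ≤ -Real.logb 2 (∑ x, p x ^ 2) :=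
        neg_le_neg (Real.logb_le_logb_of_le one_lt_two (sum_sq_pos_of_sum_eq_one hp1) hcollision)
    _ ≤ shannonEntropy p := neg_logb_sum_sq_le_shannonEntropy hp0 hp1

/-- If `X` is an `(n/2)`-wise independent random variable on `{0,1}^n` (`n` positive and
even), then `H(X) ≥ n − log₂(n+1)`. -/
theorem entropy_of_half_wise_indep (n : ℕ) (hn : 0 < n) (heven : Even n)
    (p : (Fin n → Bool) → ℝ) (hp0 : ∀ x, 0 ≤ p x) (hp1 : ∑ x, p x = 1)
    (hindep : KWiseIndep n (n / 2) p) :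
    shannonEntropy p ≥ (n : ℝ) - Real.logb 2 ((n : ℝ) + 1) :=
  entropy_of_half_wise_indep_general n p hp0 hp1 hindep
end

section
/- Let n be a positive even integer and let X be a random variable taking values in {0,1}^n whose joint distribution is (n/2)-wise independent. Then the collision probability satisfies ∑_{x ∈ {0,1}^n} Pr(X = x)² ≤ (n+1)/2^n; equivalently, the Rényi entropy of order 2 satisfies H₂(X) ≥ n − log₂(n+1). -/
open Finset

namespace BoolCube

variable {n : ℕ}

noncomputable def walsh (S : Finset (Fin n)) (x : Fin n → Bool) : ℝ :=
  ∏ i ∈ S, if x i then -1 else 1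

noncomputable def walshCoeff (p : (Fin n → Bool) → ℝ) (S : Finset (Fin n)) : ℝ :=
  ∑ x, p x * walsh S x

theorem walsh_xor (S : Finset (Fin n)) (x y : Fin n → Bool) :
    walsh S (fun i => x i ^^ y i) = walsh S x * walsh S y := by
  rw [walsh, walsh, walsh, ← prod_mul_distrib]
  refine prod_congr rfl fun i _ => ?_
  cases x i <;> cases y i <;> norm_num

theorem sum_walsh (x : Fin n → Bool) :
    ∑ S, walsh S x = if x = fun _ => false then 2 ^ n else 0 := by
  rw [← powerset_univ]
  simp only [walsh]
  rw [← prod_one_add]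
  split_ifs with hx
  · subst hx
    norm_num
  · obtain ⟨i, hi⟩ : ∃ i, x i = true := by simpa [funext_iff] using hx
    exact prod_eq_zero (mem_univ i) (by simp [hi])

theorem sum_walsh_mul_walsh (x y : Fin n → Bool) :
    ∑ S, walsh S x * walsh S y = if x = y then 2 ^ n else 0 := by
  simp_rw [← walsh_xor, sum_walsh]
  simp [funext_iff]

theorem sum_walsh_mul_walshCoeff_sq (p : (Fin n → Bool) → ℝ) (y : Fin n → Bool) :
    ∑ S, walsh S y * walshCoeff p S ^ 2 = 2 ^ n * ∑ x, p x * p (fun i => x i ^^ y i) :=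
  calc ∑ S, walsh S y * walshCoeff p S ^ 2
      = ∑ x, ∑ z, p x * p z * ∑ S, walsh S (fun i => x i ^^ y i) * walsh S z := by
        have hS : ∀ S, walsh S y * walshCoeff p S ^ 2
            = ∑ x, ∑ z, p x * p z * (walsh S (fun i => x i ^^ y i) * walsh S z) := by
          intro S
          rw [walshCoeff, sq, sum_mul_sum, mul_sum]
          refine sum_congr rfl fun x _ => ?_
          rw [mul_sum, walsh_xor]
          exact sum_congr rfl fun z _ => by ring
        simp_rw [hS, mul_sum]
        rw [sum_comm]
        exact sum_congr rfl fun x _ => sum_comm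
    _ = 2 ^ n * ∑ x, p x * p (fun i => x i ^^ y i) := by
        simp_rw [sum_walsh_mul_walsh, mul_ite, mul_zero, sum_ite_eq, mem_univ, if_true, mul_sum]
        exact sum_congr rfl fun x _ => by ring

theorem sum_walshCoeff_sq (p : (Fin n → Bool) → ℝ) :
    ∑ S, walshCoeff p S ^ 2 = 2 ^ n * ∑ x, p x ^ 2 := by
  simpa [walsh, sq] using sum_walsh_mul_walshCoeff_sq p (fun _ => false)

theorem walshCoeff_empty (p : (Fin n → Bool) → ℝ) : walshCoeff p ∅ = ∑ x, p x := by
  simp [walshCoeff, walsh]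

theorem one_le_two_pow_mul_sum_sq {p : (Fin n → Bool) → ℝ} (hp : ∑ x, p x = 1) :
    1 ≤ 2 ^ n * ∑ x, p x ^ 2 :=
  calc (1 : ℝ) = walshCoeff p ∅ ^ 2 := by rw [walshCoeff_empty, hp, one_pow]
    _ ≤ 2 ^ n * ∑ x, p x ^ 2 :=
        sum_walshCoeff_sq p ▸ single_le_sum (fun S _ => sq_nonneg (walshCoeff p S)) (mem_univ _)

theorem sum_walsh_indicator (S : Finset (Fin n)) :
    ∑ i, walsh S (fun j => decide (j = i)) = n - 2 * S.card := by
  have h : ∀ i, walsh S (fun j => decide (j = i)) = 1 - 2 * if i ∈ S then 1 else 0 := by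
    intro i
    simp only [walsh, decide_eq_true_eq, prod_ite_eq']
    split_ifs <;> norm_num
  simp_rw [h, sum_sub_distrib, ← mul_sum, sum_boole, filter_mem_eq_inter, univ_inter]
  simp

theorem two_mul_sum_card_mul_walshCoeff_sq_le {p : (Fin n → Bool) → ℝ} (hp : ∀ x, 0 ≤ p x) :
    ∑ S, 2 * (S.card : ℝ) * walshCoeff p S ^ 2 ≤ n * ∑ S, walshCoeff p S ^ 2 := by
  have h : 0 ≤ ∑ i, ∑ S, walsh S (fun j => decide (j = i)) * walshCoeff p S ^ 2 :=
    sum_nonneg fun i _ => by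
      rw [sum_walsh_mul_walshCoeff_sq]
      exact mul_nonneg (by positivity) (sum_nonneg fun x _ => mul_nonneg (hp _) (hp _))
  rw [sum_comm] at h
  simp_rw [← sum_mul, sum_walsh_indicator, sub_mul, sum_sub_distrib, ← mul_sum] at h
  linarith

/-- One representative, vanishing off `S`, of each pattern of bits on `S`. -/
def cubeOn (S : Finset (Fin n)) : Finset (Fin n → Bool) :=
  Fintype.piFinset fun i => if i ∈ S then univ else {false}

theorem walshCoeff_eq_sum_cubeOn (p : (Fin n → Bool) → ℝ) (S : Finset (Fin n)) :
    walshCoeff p S =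
      ∑ a ∈ cubeOn S, walsh S a * ∑ x ∈ univ.filter fun x => ∀ i ∈ S, x i = a i, p x := by
  have hmaps : ∀ x ∈ (univ : Finset (Fin n → Bool)), S.piecewise x (fun _ => false) ∈ cubeOn S := by
    intro x _
    simp only [cubeOn, Fintype.mem_piFinset]
    intro i
    by_cases hi : i ∈ S <;> simp [hi]
  rw [walshCoeff, ← sum_fiberwise_of_maps_to hmaps]
  refine sum_congr rfl fun a ha => ?_
  rw [mul_sum]
  refine sum_congr (filter_congr fun x _ => ?_) fun x hx => ?_
  · have ha' : ∀ i ∉ S, a i = false := fun i hi => by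
      simpa [hi] using (Fintype.mem_piFinset.mp ha) i
    simp only [funext_iff, piecewise]
    refine ⟨fun h i hi => by simpa [hi] using h i, fun h i => ?_⟩
    by_cases hi : i ∈ S <;> simp [hi, h, ha']
  · have hxa : walsh S x = walsh S a := prod_congr rfl fun i hi => by
      rw [(mem_filter.mp hx).2 i hi]
    rw [hxa, mul_comm]

theorem sum_cubeOn_walsh {S : Finset (Fin n)} (hS : S.Nonempty) :
    ∑ a ∈ cubeOn S, walsh S a = 0 := by
  obtain ⟨i₀, hi₀⟩ := hS
  have h : ∀ a : Fin n → Bool,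
      walsh S a = ∏ i, if i ∈ S then (if a i then -1 else 1) else 1 := fun a => by
    rw [prod_ite_mem, univ_inter, walsh]
  simp_rw [h]
  rw [cubeOn, ← prod_univ_sum _ fun i (b : Bool) => if i ∈ S then (if b then (-1 : ℝ) else 1) else 1]
  exact prod_eq_zero (mem_univ i₀) (by simp [hi₀])

end BoolCube

namespace KWiseIndep

open BoolCube

variable {n k : ℕ} {p : (Fin n → Bool) → ℝ}

theorem sum_eq_one (h : KWiseIndep n k p) : ∑ x, p x = 1 := by
  simpa using h ∅ (by simp) fun _ => false

theorem walshCoeff_eq_zero (h : KWiseIndep n k p) {S : Finset (Fin n)} (hS : S.Nonempty)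
    (hSk : S.card ≤ k) : walshCoeff p S = 0 := by
  simp_rw [walshCoeff_eq_sum_cubeOn, h S hSk, ← sum_mul, sum_cubeOn_walsh hS, zero_mul]

theorem collision_bound (hp : ∀ x, 0 ≤ p x) (h : KWiseIndep n k p) :
    (2 * (k + 1) - n : ℝ) * (2 ^ n * ∑ x, p x ^ 2 - 1) ≤ n := by
  have hterm : ∀ S : Finset (Fin n),
      2 * ((k : ℝ) + 1) * (walshCoeff p S ^ 2 - if S = ∅ then 1 else 0)
        ≤ 2 * S.card * walshCoeff p S ^ 2 := by
    intro S
    rcases S.eq_empty_or_nonempty with rfl | hS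
    · simp [walshCoeff_empty, h.sum_eq_one]
    rw [if_neg hS.ne_empty, sub_zero]
    rcases le_or_gt S.card k with hSk | hkS
    · simp [h.walshCoeff_eq_zero hS hSk]
    · gcongr
      exact_mod_cast hkS
  have hsum := sum_le_sum fun S (_ : S ∈ univ) => hterm S
  rw [← mul_sum, sum_sub_distrib, sum_ite_eq', if_pos (mem_univ _), sum_walshCoeff_sq] at hsum
  have hlevel := two_mul_sum_card_mul_walshCoeff_sq_le hp
  rw [sum_walshCoeff_sq] at hlevel
  linarith

end KWiseIndep

theorem renyi_of_half_wise_indep_general (n : ℕ)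
    (p : (Fin n → Bool) → ℝ) (hp0 : ∀ x, 0 ≤ p x)
    (hindep : KWiseIndep n (n / 2) p) :
    (∑ x, (p x) ^ 2) ≤ ((n : ℝ) + 1) / 2 ^ n ∧
      -Real.logb 2 (∑ x, (p x) ^ 2) ≥ (n : ℝ) - Real.logb 2 ((n : ℝ) + 1) := by
  have hlower := BoolCube.one_le_two_pow_mul_sum_sq hindep.sum_eq_one
  have hk : (1 : ℝ) ≤ 2 * ((n / 2 : ℕ) + 1) - n := by
    have : n ≤ 2 * (n / 2) + 1 := by omega
    have : (n : ℝ) ≤ 2 * (n / 2 : ℕ) + 1 := by exact_mod_cast this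
    linarith
  have hupper : 2 ^ n * ∑ x, p x ^ 2 ≤ n + 1 := by
    nlinarith [hindep.collision_bound hp0]
  have hpos : 0 < ∑ x, p x ^ 2 := pos_of_mul_pos_right (a := 2 ^ n) (by linarith) (by positivity)
  have hcoll : ∑ x, p x ^ 2 ≤ (n + 1) / 2 ^ n := by
    rw [le_div_iff₀ (by positivity)]
    linarith
  refine ⟨hcoll, ?_⟩
  have hlog := Real.logb_le_logb_of_le one_lt_two hpos hcoll
  rw [Real.logb_div (by positivity) (by positivity), Real.logb_pow,
    Real.logb_self_eq_one one_lt_two] at hlog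
  linarith

/-- If `X` is an `(n/2)`-wise independent random variable on `{0,1}^n` (`n` positive and
even), then the collision probability is at most `(n+1)/2^n`; equivalently the Rényi
entropy of order 2 satisfies `H₂(X) ≥ n − log₂(n+1)`. -/
theorem renyi_of_half_wise_indep (n : ℕ) (hn : 0 < n) (heven : Even n)
    (p : (Fin n → Bool) → ℝ) (hp0 : ∀ x, 0 ≤ p x) (hp1 : ∑ x, p x = 1)
    (hindep : KWiseIndep n (n / 2) p) :
    (∑ x, (p x) ^ 2) ≤ ((n : ℝ) + 1) / 2 ^ n ∧
      -Real.logb 2 (∑ x, (p x) ^ 2) ≥ (n : ℝ) - Real.logb 2 ((n : ℝ) + 1) :=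
  renyi_of_half_wise_indep_general n p hp0 hindep
end

section
/- Let C ⊆ F₂^n be a binary linear code with minimum distance d ≥ 1, and let C^⊥ = {y ∈ F₂^n : ⟨y, c⟩ = 0 for all c ∈ C} be its dual code. Then the uniform distribution on C^⊥, viewed as a random variable taking values in {0,1}^n, is (d−1)-wise independent. -/
/-!
If `#S < d`, restricting the dual code to the coordinates in `S` is onto `F₂^S`: a vector of
`F₂^S` orthogonal to the restricted dual code, extended by zero, is orthogonal to `C^⊥`, hence
lies in `C^⊥⊥ = C`; its weight is at most `#S < d`, so it vanishes. The fibres of a surjective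
homomorphism on `C^⊥` are cosets of its kernel, so each of the `2^#S` patterns on `S` is taken by
exactly `#C^⊥ / 2^#S` codewords of `C^⊥`.
-/

open Finset Matrix Function

section ExtendByZero

variable {R ι : Type*} {s : Finset ι}

theorem extend_val_apply_of_notMem [Zero R] (c : s → R) {i : ι} (hi : i ∉ s) :
    extend Subtype.val c 0 i = 0 :=
  extend_apply' _ _ _ fun ⟨j, hj⟩ => hi (hj ▸ j.2)

theorem hammingNorm_extend_val_le [Fintype ι] [Zero R] [DecidableEq R] (c : s → R) :
    hammingNorm (extend Subtype.val c 0) ≤ #s :=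
  card_le_card fun _ hi =>
    by_contra fun hs => (mem_filter.1 hi).2 (extend_val_apply_of_notMem c hs)

theorem extend_val_dotProduct [Fintype ι] [NonUnitalNonAssocSemiring R] (c : s → R) (y : ι → R) :
    extend Subtype.val c 0 ⬝ᵥ y = c ⬝ᵥ fun i : s => y i := by
  rw [dotProduct, ← sum_subset (subset_univ s) fun i _ hi => by
      rw [extend_val_apply_of_notMem c hi, zero_mul], ← sum_coe_sort]
  exact sum_congr rfl fun _ _ => by rw [Subtype.val_injective.extend_apply]

end ExtendByZero

section DualCode

variable {K ι : Type*} [Field K] [Fintype ι]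

def dualCode (C : Submodule K (ι → K)) : Submodule K (ι → K) :=
  LinearMap.BilinForm.orthogonal (dotProductBilin K K) C

theorem mem_dualCode {C : Submodule K (ι → K)} {y : ι → K} :
    y ∈ dualCode C ↔ ∀ c ∈ C, y ⬝ᵥ c = 0 := by
  simp [dualCode, LinearMap.BilinForm.mem_orthogonal_iff, dotProduct_comm]

theorem dualCode_bot : dualCode (⊥ : Submodule K (ι → K)) = ⊤ :=
  LinearMap.BilinForm.orthogonal_bot

theorem dualCode_dualCode (C : Submodule K (ι → K)) : dualCode (dualCode C) = C := by
  refine LinearMap.BilinForm.orthogonal_orthogonal ⟨?_, ?_⟩ ?_ C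
  · exact dotProduct_eq_zero
  · exact fun y hy => dotProduct_eq_zero y fun x => by simpa [dotProduct_comm] using hy x
  · intro x y h
    simpa [dotProduct_comm] using h

theorem map_funLeft_dualCode_eq_top [DecidableEq K] {C : Submodule K (ι → K)} {s : Finset ι}
    (hC : ∀ c ∈ C, c ≠ 0 → #s < hammingNorm c) :
    (dualCode C).map (LinearMap.funLeft K K ((↑) : s → ι)) = ⊤ := by
  suffices h : dualCode ((dualCode C).map (LinearMap.funLeft K K ((↑) : s → ι))) = ⊥ by
    rw [← dualCode_dualCode (Submodule.map _ _), h, dualCode_bot]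
  refine eq_bot_iff.2 fun c hc => ?_
  have hext : extend Subtype.val c 0 ∈ C := by
    rw [← dualCode_dualCode C, mem_dualCode]
    intro y hy
    rw [extend_val_dotProduct]
    exact mem_dualCode.1 hc _ (Submodule.mem_map_of_mem hy)
  have hext0 : extend Subtype.val c 0 = 0 := by
    by_contra hne
    exact (hammingNorm_extend_val_le c).not_gt (hC _ hext hne)
  rw [Submodule.mem_bot]
  funext i
  simpa [Subtype.val_injective.extend_apply] using congrFun hext0 i

end DualCode

namespace AddSubgroup

variable {V M : Type*} [AddCommGroup V] [AddCommGroup M] [Fintype V] [DecidableEq M]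
  (W : AddSubgroup V) [DecidablePred (· ∈ W)] (f : V →+ M)

theorem card_fiber_eq_card_fiber (hf : ∀ b, ∃ w ∈ W, f w = b) (b b' : M) :
    #{x | x ∈ W ∧ f x = b} = #{x | x ∈ W ∧ f x = b'} := by
  obtain ⟨w, hw, hfw⟩ := hf (b' - b)
  refine card_bij' (fun x _ => x + w) (fun x _ => x - w) ?_ ?_ ?_ ?_ <;>
    simp_all [add_mem, sub_mem]

theorem card_fiber_mul_card_eq_card [Fintype M] (hf : ∀ b, ∃ w ∈ W, f w = b) (b : M) :
    #{x | x ∈ W ∧ f x = b} * Fintype.card M = #{x | x ∈ W} := by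
  rw [eq_comm, card_eq_sum_card_fiberwise (f := f) (t := univ) fun _ _ => mem_univ _,
    sum_congr rfl fun b' _ => by rw [filter_filter, card_fiber_eq_card_fiber W f hf b' b],
    sum_const, card_univ, smul_eq_mul, mul_comm]

end AddSubgroup

open Classical in
theorem dual_code_kwise_indep_general (n d : ℕ)
    (C : Submodule (ZMod 2) (Fin n → ZMod 2))
    (hmin : ∀ c ∈ C, c ≠ 0 → d ≤ hammingNorm c) :
    let Dual : Finset (Fin n → ZMod 2) :=
      Finset.univ.filter fun y => ∀ c ∈ C, ∑ i, y i * c i = 0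
    let p : (Fin n → ZMod 2) → ℝ := fun x => if x ∈ Dual then 1 / Dual.card else 0
    ∀ S : Finset (Fin n), S.card ≤ d - 1 → ∀ a : Fin n → ZMod 2,
      (∑ x ∈ Finset.univ.filter fun x => ∀ i ∈ S, x i = a i, p x) =
        (1 / 2 : ℝ) ^ S.card := by
  intro Dual p S hS a
  set A : Finset (Fin n → ZMod 2) := univ.filter fun x => ∀ i ∈ S, x i = a i
  set r := LinearMap.funLeft (ZMod 2) (ZMod 2) ((↑) : S → Fin n)
  have hweight : ∀ c ∈ C, c ≠ 0 → #S < hammingNorm c := fun c hc hc0 => by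
    have := hammingNorm_pos_iff.2 hc0
    have := hmin c hc hc0
    omega
  have hsurj : ∀ b, ∃ y ∈ (dualCode C).toAddSubgroup, r y = b := fun b =>
    Submodule.mem_map.1 ((map_funLeft_dualCode_eq_top hweight).symm ▸ Submodule.mem_top)
  have hcount := (dualCode C).toAddSubgroup.card_fiber_mul_card_eq_card r.toAddMonoidHom hsurj (r a)
  have hDual : Dual = ({x | x ∈ dualCode C} : Finset _) :=
    filter_congr fun _ _ => mem_dualCode.symm
  have hfiber : A ∩ Dual =
      ({x | x ∈ (dualCode C).toAddSubgroup ∧ r x = r a} : Finset _) := by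
    ext x
    simp [A, hDual, r, funext_iff, and_comm]
  have hsum : ∑ x ∈ A, p x = (#(A ∩ Dual) : ℝ) / #Dual := by
    rw [sum_ite_mem, sum_const, nsmul_eq_mul, mul_one_div]
  have hcard : #Dual = #(A ∩ Dual) * 2 ^ #S := by
    rw [hfiber, hDual]
    simpa using hcount.symm
  have hpos : (#(A ∩ Dual) : ℝ) ≠ 0 := by
    obtain ⟨y, hy, hya⟩ := hsurj (r a)
    rw [hfiber, Nat.cast_ne_zero]
    exact card_ne_zero_of_mem (mem_filter.2 ⟨mem_univ y, hy, hya⟩)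
  rw [hsum, hcard, Nat.cast_mul, Nat.cast_pow, Nat.cast_ofNat, div_mul_cancel_left₀ hpos,
    one_div, inv_pow]

open Classical in
/-- If `C ⊆ F₂^n` is a linear code of minimum distance `d ≥ 1` (every nonzero codeword
has Hamming weight at least `d`), then the uniform distribution on the dual code
`C^⊥ = {y : ⟨y, c⟩ = 0 for all c ∈ C}` is `(d−1)`-wise independent. -/
theorem dual_code_kwise_indep (n d : ℕ) (hd : 1 ≤ d)
    (C : Submodule (ZMod 2) (Fin n → ZMod 2))
    (hmin : ∀ c ∈ C, c ≠ 0 → d ≤ hammingNorm c) :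
    let Dual : Finset (Fin n → ZMod 2) :=
      Finset.univ.filter fun y => ∀ c ∈ C, ∑ i, y i * c i = 0
    let p : (Fin n → ZMod 2) → ℝ := fun x => if x ∈ Dual then 1 / Dual.card else 0
    ∀ S : Finset (Fin n), S.card ≤ d - 1 → ∀ a : Fin n → ZMod 2,
      (∑ x ∈ Finset.univ.filter fun x => ∀ i ∈ S, x i = a i, p x) =
        (1 / 2 : ℝ) ^ S.card :=
  dual_code_kwise_indep_general n d C hmin
end

section
/- Let m ≥ 1 and n = 2^m − 1. Then there exists an F₂-linear subspace V ⊆ F₂^n of dimension n − m (so |V| = 2^n/(n+1)) such that the uniform distribution X on V is ⌊n/2⌋-wise independent; in particular H(X) = n − log₂(n+1), so the entropy lower bound n − log₂(n+1) for ⌊n/2⌋-wise independent distributions is attained. -/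
/-! The witness is the binary Hamming code: the kernel of the `m × (2^m - 1)` parity-check matrix
whose columns are all nonzero vectors of `F₂^m`. A proper subspace of `F₂^m` has fewer than
`2^(m-1)` nonzero vectors, so the columns outside any set `S` of at most `⌊n/2⌋` coordinates
span `F₂^m`. Hence every pattern on `S` extends to a codeword, i.e. the restriction of the code
to `S` is onto; its fibres are cosets of its kernel, so all patterns are equally likely. The
code has `2^(n-m) = 2^n/(n+1)` elements, whence the entropy of its uniform distribution. -/

open Finset

theorem Submodule.card_mul_card_le_of_ne_top {K M : Type*} [DivisionRing K] [AddCommGroup M]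
    [Module K M] [Finite M] {W : Submodule K M} (hW : W ≠ ⊤) :
    Nat.card W * Nat.card K ≤ Nat.card M := by
  have : Nontrivial (M ⧸ W) := Quotient.nontrivial_iff.mpr hW
  have : Finite (M ⧸ W) := .of_surjective _ W.mkQ_surjective
  obtain ⟨v, hv⟩ := exists_ne (0 : M ⧸ W)
  rw [W.card_eq_card_quotient_mul_card]
  exact Nat.mul_le_mul_left _ (Nat.card_le_card_of_injective _ (smul_left_injective K hv))

theorem Submodule.span_eq_top_of_card_lt {K M : Type*} [DivisionRing K] [AddCommGroup M]
    [Module K M] [Finite M] {s : Finset M} (hs₀ : 0 ∉ s)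
    (hs : Nat.card M < Nat.card K * (#s + 1)) : span K (s : Set M) = ⊤ := by
  classical
  by_contra hW
  have hcard : #s + 1 ≤ Nat.card (span K (s : Set M)) := by
    rw [← card_insert_of_notMem hs₀, ← Nat.card_eq_finsetCard]
    refine Nat.card_mono (Set.toFinite _) fun x hx => ?_
    rcases mem_insert.mp hx with rfl | hx
    · exact zero_mem _
    · exact subset_span hx
  refine hs.not_ge ?_
  calc Nat.card K * (#s + 1) ≤ Nat.card K * Nat.card (span K (s : Set M)) := by gcongr
    _ ≤ Nat.card M := by rw [mul_comm]; exact card_mul_card_le_of_ne_top hW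

theorem exists_mem_ker_linearCombination_eqOn {R M ι : Type*} [CommRing R] [AddCommGroup M]
    [Module R M] [Fintype ι] [DecidableEq ι] {v : ι → M} {S : Finset ι}
    (hS : Submodule.span R (v '' ↑Sᶜ) = ⊤) (a : ι → R) :
    ∃ x ∈ LinearMap.ker (Fintype.linearCombination R v), ∀ i ∈ S, x i = a i := by
  have hmem : -∑ i ∈ S, a i • v i ∈ Submodule.span R (v '' ↑Sᶜ) := hS ▸ Submodule.mem_top
  obtain ⟨z, hz⟩ := (Submodule.mem_span_image_finset_iff_exists_fun' R).mp hmem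
  refine ⟨S.piecewise a z, ?_, fun i hi => S.piecewise_eq_of_mem a z hi⟩
  have hin : ∑ i ∈ S, S.piecewise a z i • v i = ∑ i ∈ S, a i • v i :=
    sum_congr rfl fun i hi => by rw [S.piecewise_eq_of_mem a z hi]
  have hout : ∑ i ∈ Sᶜ, S.piecewise a z i • v i = ∑ i ∈ Sᶜ, z i • v i :=
    sum_congr rfl fun i hi => by rw [S.piecewise_eq_of_notMem a z (mem_compl.mp hi)]
  rw [LinearMap.mem_ker, Fintype.linearCombination_apply, ← sum_add_sum_compl S, hin, hout, hz,
    add_neg_cancel]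

theorem AddMonoidHom.card_fiber_mul_card_eq_of_surjective {G H : Type*} [AddGroup G] [AddGroup H]
    {f : G →+ H} (hf : Function.Surjective f) (y : H) :
    Nat.card (f ⁻¹' {y}) * Nat.card H = Nat.card G := by
  rw [Nat.card_congr (f.fiberEquivKerOfSurjective hf y), ← AddSubgroup.card_top (G := H),
    ← f.range_eq_top.mpr hf, ← AddSubgroup.index_ker, AddSubgroup.card_mul_index]

theorem Submodule.card_filter_eqOn_mul_card_pow {K ι : Type*} [Ring K] [Fintype K] [DecidableEq K]
    [Fintype ι] [DecidableEq ι] {V : Submodule K (ι → K)} [DecidablePred (· ∈ V)] {S : Finset ι}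
    (hV : ∀ a : ι → K, ∃ x ∈ V, ∀ i ∈ S, x i = a i) (a : ι → K) :
    #{x | (∀ i ∈ S, x i = a i) ∧ x ∈ V} * Nat.card K ^ #S = Nat.card V := by
  let r : V →ₗ[K] S → K := (LinearMap.funLeft K K Subtype.val).comp V.subtype
  have hr : Function.Surjective r := fun b => by
    obtain ⟨x, hxV, hx⟩ := hV fun i => if h : i ∈ S then b ⟨i, h⟩ else 0
    exact ⟨⟨x, hxV⟩, funext fun i => by simp [r, LinearMap.funLeft_apply, hx i i.2]⟩
  have hfiber : Nat.card (r ⁻¹' {fun i : S => a i}) = #{x | (∀ i ∈ S, x i = a i) ∧ x ∈ V} := by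
    rw [← Fintype.card_subtype, ← Nat.card_eq_fintype_card]
    refine Nat.card_congr ((Equiv.subtypeEquivRight fun v => ?_).trans
      ((Equiv.subtypeSubtypeEquivSubtypeInter (· ∈ V) fun x => ∀ i ∈ S, x i = a i).trans
        (Equiv.subtypeEquivRight fun x => and_comm)))
    simp [r, funext_iff, LinearMap.funLeft_apply]
  rw [← hfiber, ← Nat.card_eq_finsetCard, ← Nat.card_fun]
  exact r.toAddMonoidHom.card_fiber_mul_card_eq_of_surjective hr _

theorem Submodule.sum_uniform_filter_eqOn {K ι : Type*} [Ring K] [Fintype K] [DecidableEq K]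
    [Fintype ι] [DecidableEq ι] {V : Submodule K (ι → K)} [DecidablePred (· ∈ V)] {S : Finset ι}
    (hV : ∀ a : ι → K, ∃ x ∈ V, ∀ i ∈ S, x i = a i) (a : ι → K) :
    ∑ x ∈ univ.filter fun x => ∀ i ∈ S, x i = a i,
        (if x ∈ V then 1 / (Nat.card V : ℝ) else 0) = (1 / (Nat.card K : ℝ)) ^ #S := by
  have hcount : (#{x | (∀ i ∈ S, x i = a i) ∧ x ∈ V} : ℝ) * (Nat.card K : ℝ) ^ #S = Nat.card V :=
    mod_cast card_filter_eqOn_mul_card_pow hV a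
  have hF : (#{x | (∀ i ∈ S, x i = a i) ∧ x ∈ V} : ℝ) ≠ 0 := by
    obtain ⟨x, hxV, hx⟩ := hV a
    exact Nat.cast_ne_zero.mpr (card_ne_zero_of_mem (mem_filter.mpr ⟨mem_univ x, hx, hxV⟩))
  rw [← sum_filter, filter_filter, sum_const, nsmul_eq_mul, one_div_pow, ← hcount]
  field_simp

theorem neg_sum_uniform_mul_logb {α : Type*} [Fintype α] (s : Set α) [DecidablePred (· ∈ s)]
    (b : ℝ) :
    -∑ x, (if x ∈ s then 1 / (Nat.card s : ℝ) else 0) *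
        Real.logb b (if x ∈ s then 1 / (Nat.card s : ℝ) else 0) = Real.logb b (Nat.card s) := by
  set N : ℝ := (Nat.card s : ℝ)
  have hterm : ∀ x, (if x ∈ s then 1 / N else 0) * Real.logb b (if x ∈ s then 1 / N else 0) =
      if x ∈ s then 1 / N * Real.logb b (1 / N) else 0 := fun x => by split_ifs <;> simp
  have hcard : (#{x | x ∈ s} : ℝ) = N := by
    rw [← Fintype.card_subtype, ← Nat.card_eq_fintype_card]
  rw [sum_congr rfl fun x _ => hterm x, ← sum_filter, sum_const, nsmul_eq_mul, hcard, one_div,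
    Real.logb_inv]
  rcases eq_or_ne N 0 with hN | hN
  · simp [hN]
  · field_simp

noncomputable def hammingColumn (m : ℕ) : Fin (2 ^ m - 1) ≃ {v : Fin m → ZMod 2 // v ≠ 0} :=
  Fintype.equivOfCardEq (by simp [Fintype.card_subtype_compl])

noncomputable def hammingCode (m : ℕ) : Submodule (ZMod 2) (Fin (2 ^ m - 1) → ZMod 2) :=
  LinearMap.ker (Fintype.linearCombination (ZMod 2) fun i => (hammingColumn m i : Fin m → ZMod 2))

theorem span_hammingColumn_compl_eq_top {m : ℕ} {S : Finset (Fin (2 ^ m - 1))}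
    (hS : #S ≤ (2 ^ m - 1) / 2) :
    Submodule.span (ZMod 2) ((fun i => (hammingColumn m i : Fin m → ZMod 2)) '' ↑Sᶜ) = ⊤ := by
  classical
  rw [← coe_image]
  refine Submodule.span_eq_top_of_card_lt (fun h => ?_) ?_
  · obtain ⟨i, -, hi⟩ := mem_image.mp h
    exact (hammingColumn m i).2 hi
  · have hinj : Function.Injective fun i => (hammingColumn m i : Fin m → ZMod 2) :=
      Subtype.val_injective.comp (hammingColumn m).injective
    rw [card_image_of_injective _ hinj, card_compl, Fintype.card_fin, Nat.card_fun, Nat.card_zmod,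
      Nat.card_eq_fintype_card, Fintype.card_fin]
    have := Nat.one_le_two_pow (n := m)
    omega

theorem finrank_hammingCode (m : ℕ) : Module.finrank (ZMod 2) (hammingCode m) = 2 ^ m - 1 - m := by
  have hsurj : Function.Surjective
      (Fintype.linearCombination (ZMod 2) fun i => (hammingColumn m i : Fin m → ZMod 2)) := by
    rw [← span_range_eq_top_iff_surjective_fintypeLinearCombination, ← Set.image_univ,
      ← coe_univ, ← compl_empty]
    exact span_hammingColumn_compl_eq_top (by simp)
  have := LinearMap.finrank_range_add_finrank_ker
    (Fintype.linearCombination (ZMod 2) fun i => (hammingColumn m i : Fin m → ZMod 2))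
  rw [LinearMap.range_eq_top.mpr hsurj, finrank_top, Module.finrank_fin_fun,
    Module.finrank_fin_fun] at this
  rw [hammingCode]
  omega

theorem card_hammingCode (m : ℕ) : Nat.card (hammingCode m) = 2 ^ (2 ^ m - 1 - m) := by
  classical
  rw [Nat.card_eq_fintype_card, Module.card_eq_pow_finrank (K := ZMod 2), ZMod.card,
    finrank_hammingCode]

open Classical in
theorem half_wise_indep_entropy_tight_general (m : ℕ) :
    ∃ V : Submodule (ZMod 2) (Fin (2 ^ m - 1) → ZMod 2),
      Module.finrank (ZMod 2) V = 2 ^ m - 1 - m ∧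
      (let p : (Fin (2 ^ m - 1) → ZMod 2) → ℝ :=
        fun x => if x ∈ V then 1 / (Nat.card V) else 0
       (∀ S : Finset (Fin (2 ^ m - 1)), S.card ≤ (2 ^ m - 1) / 2 →
          ∀ a : Fin (2 ^ m - 1) → ZMod 2,
            (∑ x ∈ Finset.univ.filter fun x => ∀ i ∈ S, x i = a i, p x) =
              (1 / 2 : ℝ) ^ S.card) ∧
        (-∑ x, p x * Real.logb 2 (p x)) =
          ((2 ^ m - 1 : ℕ) : ℝ) - Real.logb 2 (((2 ^ m - 1 : ℕ) : ℝ) + 1)) := by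
  refine ⟨hammingCode m, finrank_hammingCode m, fun S hS a => ?_, ?_⟩
  · have := (hammingCode m).sum_uniform_filter_eqOn
      (exists_mem_ker_linearCombination_eqOn (span_hammingColumn_compl_eq_top hS)) a
    rw [Nat.card_zmod, Nat.cast_ofNat] at this
    -- `convert` reconciles the classical decidability instances of the statement.
    convert this
  · have hm : m ≤ 2 ^ m - 1 := Nat.le_sub_one_of_lt Nat.lt_two_pow_self
    have hn : ((2 ^ m - 1 : ℕ) : ℝ) + 1 = 2 ^ m := by
      rw [Nat.cast_sub Nat.one_le_two_pow]
      push_cast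
      ring
    refine (neg_sum_uniform_mul_logb (hammingCode m : Set (Fin (2 ^ m - 1) → ZMod 2)) 2).trans ?_
    rw [SetLike.coe_sort_coe, card_hammingCode, hn, Nat.cast_pow,
      Nat.cast_ofNat, Real.logb_pow, Real.logb_pow, Real.logb_self_eq_one one_lt_two,
      Nat.cast_sub hm]
    ring

open Classical in
/-- For `n = 2^m − 1` there is an `F₂`-linear subspace `V ⊆ F₂^n` of dimension `n − m`
(the Hadamard/simplex dual construction) whose uniform distribution is `⌊n/2⌋`-wise
independent and has Shannon entropy exactly `n − log₂(n+1)`: the entropy lower bound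
is attained. -/
theorem half_wise_indep_entropy_tight (m : ℕ) (hm : 1 ≤ m) :
    ∃ V : Submodule (ZMod 2) (Fin (2 ^ m - 1) → ZMod 2),
      Module.finrank (ZMod 2) V = 2 ^ m - 1 - m ∧
      (let p : (Fin (2 ^ m - 1) → ZMod 2) → ℝ :=
        fun x => if x ∈ V then 1 / (Nat.card V) else 0
       (∀ S : Finset (Fin (2 ^ m - 1)), S.card ≤ (2 ^ m - 1) / 2 →
          ∀ a : Fin (2 ^ m - 1) → ZMod 2,
            (∑ x ∈ Finset.univ.filter fun x => ∀ i ∈ S, x i = a i, p x) =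
              (1 / 2 : ℝ) ^ S.card) ∧
        (-∑ x, p x * Real.logb 2 (p x)) =
          ((2 ^ m - 1 : ℕ) : ℝ) - Real.logb 2 (((2 ^ m - 1 : ℕ) : ℝ) + 1)) :=
  half_wise_indep_entropy_tight_general m
end
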